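/- arXiv:1604.00622 — 7 statements merged into one kernel-verified Lean document; each statement's English description precedes it below -/
import Mathlib

section
/- For all nonnegative integers l and m, B_m^{(-l)} = B_l^{(-m)}, where B_n^{(k)} are the poly-Bernoulli numbers. -/
/-!
Expanding `Li_{-l}(u)/u = ∑_p (p+1)^l u^p` at `u = 1 - e^{-t}` gives
`B_m^{(-l)} = ∑_p (-1)^(m+p) p! S(m,p) (p+1)^l`; the coefficients of `(1 - e^{-t})^p` come from the
differential equation `u' = 1 - u`, which turns into the recurrence of the Stirling numbers.
Writing `(p+1)^l = ∑_j C(p,j) j! S(l+1,j+1)` and summing over `p` first yields Kaneko's formula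
`B_m^{(-l)} = ∑_j (j!)^2 S(l+1,j+1) S(m+1,j+1)`, which is symmetric in `l` and `m`.
-/

open PowerSeries Finset

/-- Unsigned Stirling numbers of the first kind. -/
def stirling1 : ℕ → ℕ → ℕ
  | 0, 0 => 1
  | 0, _ + 1 => 0
  | _ + 1, 0 => 0
  | n + 1, m + 1 => stirling1 n m + n * stirling1 n (m + 1)

/-- Stirling numbers of the second kind. -/
def stirling2 : ℕ → ℕ → ℕ
  | 0, 0 => 1
  | 0, _ + 1 => 0
  | _ + 1, 0 => 0
  | n + 1, m + 1 => stirling2 n m + (m + 1) * stirling2 n (m + 1)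

/-- e^t as a formal power series over ℚ. -/
noncomputable def expQ : PowerSeries ℚ := PowerSeries.exp ℚ

/-- e^{-t} as a formal power series over ℚ. -/
noncomputable def expNegQ : PowerSeries ℚ := rescale (-1) expQ

/-- The formal power series Li_k(1-e^{-t})/(1-e^{-t}) = ∑_{m≥0} (m+1)^{-k} (1-e^{-t})^m,
  defined coefficientwise (the tail vanishes since (1-e^{-t})^m has order m). -/
noncomputable def liEGF (k : ℤ) : PowerSeries ℚ :=
  PowerSeries.mk fun j =>
    ∑ m ∈ range (j + 1), ((m : ℚ) + 1) ^ (-k) * coeff j ((1 - expNegQ) ^ m)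

/-- EGF of the poly-Bernoulli polynomials: e^{-xt} Li_k(1-e^{-t})/(1-e^{-t}). -/
noncomputable def pbEGF (k : ℤ) (x : ℚ) : PowerSeries ℚ := rescale (-x) expQ * liEGF k

/-- Poly-Bernoulli polynomial value B_m^{(k)}(x). -/
noncomputable def pbPoly (k : ℤ) (x : ℚ) (m : ℕ) : ℚ := m.factorial * coeff m (pbEGF k x)

/-- Poly-Bernoulli number B_m^{(k)}. -/
noncomputable def pbB (k : ℤ) (m : ℕ) : ℚ := pbPoly k 0 m

/-- Poly-Bernoulli number C_m^{(k)}. -/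
noncomputable def pbC (k : ℤ) (m : ℕ) : ℚ := pbPoly k 1 m

/-- 𝓑_m^{(-l)}(n) = ∑_{j=0}^n [n j] B_m^{(-l-j)}(n). -/
noncomputable def scrB (l m n : ℕ) : ℚ :=
  ∑ j ∈ range (n + 1), (stirling1 n j : ℚ) * pbPoly (-(l : ℤ) - j) n m

open Nat

/-- `m!` times the coefficient of `t^m` in `(1 - e^{-t})^p`; up to sign, `p! S(m, p)` counts the
surjections from an `m`-set onto a `p`-set. -/
def signedSurj (m p : ℕ) : ℤ := (-1) ^ (m + p) * p ! * stirlingSecond m p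

lemma signedSurj_zero_left (p : ℕ) : signedSurj 0 p = if p = 0 then 1 else 0 := by
  cases p <;> simp [signedSurj]

lemma signedSurj_succ_zero (m : ℕ) : signedSurj (m + 1) 0 = 0 := by
  simp [signedSurj]

lemma signedSurj_eq_zero_of_lt {m p : ℕ} (h : m < p) : signedSurj m p = 0 := by
  simp [signedSurj, stirlingSecond_eq_zero_of_lt h]

lemma signedSurj_succ_succ (m p : ℕ) :
    signedSurj (m + 1) (p + 1) = (p + 1) * (signedSurj m p - signedSurj m (p + 1)) := by
  simp only [signedSurj, stirlingSecond_succ_succ, factorial_succ]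
  push_cast
  ring

lemma derivative_expNegQ : d⁄dX ℚ expNegQ = -expNegQ := by
  ext n
  simp only [coeff_derivative, expNegQ, expQ, coeff_rescale, coeff_exp, map_neg, factorial_succ]
  push_cast
  field_simp
  ring

lemma derivative_one_sub_expNegQ_pow_succ (p : ℕ) :
    d⁄dX ℚ ((1 - expNegQ) ^ (p + 1)) =
      ((p : ℚ) + 1) • ((1 - expNegQ) ^ p - (1 - expNegQ) ^ (p + 1)) := by
  rw [derivative_pow, map_sub, derivative_one, derivative_expNegQ, smul_eq_C_mul]
  simp only [map_add, map_natCast, map_one, Nat.cast_succ, add_tsub_cancel_right]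
  ring

lemma coeff_one_sub_expNegQ_pow (n p : ℕ) :
    coeff n ((1 - expNegQ) ^ p) = (signedSurj n p : ℚ) / n ! := by
  induction n generalizing p with
  | zero =>
    rw [coeff_zero_eq_constantCoeff_apply, map_pow, map_sub, signedSurj_zero_left]
    cases p <;> simp [expNegQ, expQ, ← coeff_zero_eq_constantCoeff_apply, coeff_rescale]
  | succ n ih =>
    cases p with
    | zero => simp [signedSurj_succ_zero, coeff_one]
    | succ p =>
      have h := congrArg (coeff n) (derivative_one_sub_expNegQ_pow_succ p)
      rw [coeff_derivative, coeff_smul, map_sub, ih, ih, smul_eq_mul] at h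
      rw [signedSurj_succ_succ, factorial_succ, eq_div_iff (by positivity)]
      field_simp at h
      push_cast
      linear_combination h

lemma pbB_neg_eq_sum (l m : ℕ) :
    pbB (-(l : ℤ)) m = ∑ p ∈ range (m + 1), (signedSurj m p : ℚ) * (p + 1) ^ l := by
  have hexp : rescale (-0 : ℚ) expQ = 1 := by
    simp [rescale_zero, expQ, ← coeff_zero_eq_constantCoeff_apply]
  rw [pbB, pbPoly, pbEGF, hexp, one_mul, liEGF, coeff_mk, mul_sum]
  refine sum_congr rfl fun p _ => ?_
  rw [neg_neg, zpow_natCast, coeff_one_sub_expNegQ_pow]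
  field_simp

lemma succ_mul_choose_eq_add (p j : ℕ) :
    (p + 1) * p.choose j = (j + 1) * p.choose j + (j + 1) * p.choose (j + 1) := by
  rw [add_one_mul_choose_eq, choose_succ_succ']
  ring

lemma succ_mul_choose_succ_succ (q i : ℕ) :
    (q + 1) * (q + 1).choose (i + 1) =
      q * q.choose (i + 1) + (i + 2) * q.choose (i + 1) + (i + 1) * q.choose i := by
  rw [choose_succ_succ', mul_add, succ_mul_choose_eq_add]
  ring

lemma add_one_pow_eq_sum_choose_mul_stirlingSecond (p l : ℕ) :
    (p + 1) ^ l = ∑ j ∈ range (l + 1), p.choose j * j ! * stirlingSecond (l + 1) (j + 1) := by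
  induction l with
  | zero => simp [stirlingSecond_self]
  | succ l ih =>
    have hsplit : ∀ j, p.choose j * j ! * stirlingSecond (l + 2) (j + 1) =
        p.choose j * (j + 1)! * stirlingSecond (l + 1) (j + 1) +
          p.choose j * j ! * stirlingSecond (l + 1) j := by
      intro j
      rw [stirlingSecond_succ_succ, factorial_succ]
      ring
    rw [sum_congr rfl fun j _ => hsplit j, sum_add_distrib, sum_range_succ,
      sum_range_succ' (fun j => p.choose j * j ! * stirlingSecond (l + 1) j),
      stirlingSecond_eq_zero_of_lt (by omega : l + 1 < l + 1 + 1), stirlingSecond_succ_zero]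
    simp only [mul_zero, add_zero]
    rw [← sum_add_distrib, pow_succ, ih, sum_mul]
    refine sum_congr rfl fun j _ => ?_
    rw [mul_assoc (p.choose j), mul_comm _ (p + 1), ← mul_assoc, add_one_mul_choose_eq,
      choose_succ_succ', factorial_succ]
    ring

lemma sum_signedSurj_mul_choose (m j : ℕ) :
    ∑ p ∈ range (m + 1), signedSurj m p * p.choose j = j ! * stirlingSecond (m + 1) (j + 1) := by
  induction m generalizing j with
  | zero => cases j <;> simp [signedSurj_zero_left, stirlingSecond_eq_zero_of_lt, stirlingSecond_self]
  | succ m ih =>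
    have hshift : ∑ p ∈ range (m + 1), ((p : ℤ) + 1) * signedSurj m (p + 1) * (p + 1).choose j =
        ∑ p ∈ range (m + 1), (p : ℤ) * signedSurj m p * p.choose j := by
      have h := (sum_range_succ' (fun p => (p : ℤ) * signedSurj m p * p.choose j) (m + 1)).symm
      rw [sum_range_succ _ (m + 1), signedSurj_eq_zero_of_lt (lt_add_one m)] at h
      simpa using h
    have hstep : ∑ p ∈ range (m + 2), signedSurj (m + 1) p * p.choose j =
        ∑ p ∈ range (m + 1),
          signedSurj m p * (((p : ℤ) + 1) * (p + 1).choose j - p * p.choose j) := by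
      rw [sum_range_succ', signedSurj_succ_zero, zero_mul, add_zero]
      simp only [signedSurj_succ_succ, mul_sub, sub_mul, sum_sub_distrib, hshift]
      congr 1 <;> exact sum_congr rfl fun _ _ => by ring
    rw [hstep]
    cases j with
    | zero => simpa [stirlingSecond_one_right] using ih 0
    | succ i =>
      calc _ = ∑ p ∈ range (m + 1), ((i + 2 : ℤ) * (signedSurj m p * p.choose (i + 1)) +
              (i + 1 : ℤ) * (signedSurj m p * p.choose i)) := by
            refine sum_congr rfl fun p _ => ?_
            have h := congrArg (Nat.cast : ℕ → ℤ) (succ_mul_choose_succ_succ p i)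
            push_cast at h
            linear_combination signedSurj m p * h
        _ = (i + 2 : ℤ) * ∑ p ∈ range (m + 1), signedSurj m p * p.choose (i + 1) +
              (i + 1 : ℤ) * ∑ p ∈ range (m + 1), signedSurj m p * p.choose i := by
            rw [sum_add_distrib, mul_sum, mul_sum]
        _ = _ := by
            rw [ih, ih, stirlingSecond_succ_succ (m + 1) (i + 1), factorial_succ]
            push_cast
            ring

lemma sum_signedSurj_mul_add_one_pow (l m : ℕ) :
    ∑ p ∈ range (m + 1), signedSurj m p * (p + 1) ^ l =
      ∑ j ∈ range (l + 1), (j ! : ℤ) ^ 2 * stirlingSecond (l + 1) (j + 1) *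
        stirlingSecond (m + 1) (j + 1) := by
  calc ∑ p ∈ range (m + 1), signedSurj m p * (p + 1) ^ l
      = ∑ p ∈ range (m + 1), ∑ j ∈ range (l + 1),
          signedSurj m p * p.choose j * (j ! * stirlingSecond (l + 1) (j + 1)) := by
        refine sum_congr rfl fun p _ => ?_
        rw [← Nat.cast_succ, ← Nat.cast_pow, add_one_pow_eq_sum_choose_mul_stirlingSecond,
          Nat.cast_sum, mul_sum]
        refine sum_congr rfl fun j _ => ?_
        push_cast
        ring
    _ = ∑ j ∈ range (l + 1), (j ! * stirlingSecond (l + 1) (j + 1)) *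
          ∑ p ∈ range (m + 1), signedSurj m p * p.choose j := by
        rw [sum_comm]
        simp only [mul_sum]
        refine sum_congr rfl fun j _ => sum_congr rfl fun p _ => by ring
    _ = _ := by
        refine sum_congr rfl fun j _ => ?_
        rw [sum_signedSurj_mul_choose]
        ring

lemma sum_signedSurj_mul_add_one_pow_comm (l m : ℕ) :
    ∑ p ∈ range (m + 1), signedSurj m p * (p + 1) ^ l =
      ∑ p ∈ range (l + 1), signedSurj l p * (p + 1) ^ m := by
  wlog hlm : l ≤ m generalizing l m
  · exact (this m l (le_of_not_ge hlm)).symm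
  rw [sum_signedSurj_mul_add_one_pow, sum_signedSurj_mul_add_one_pow]
  refine (sum_subset (range_subset_range.2 (by omega)) fun j _ hjl => ?_).trans
    (sum_congr rfl fun j _ => by ring)
  simp only [mem_range, not_lt] at hjl
  simp [stirlingSecond_eq_zero_of_lt (show l + 1 < j + 1 by omega)]

/-- Duality for poly-Bernoulli numbers: B_m^{(-l)} = B_l^{(-m)}. -/
theorem polyBernoulli_duality (l m : ℕ) : pbB (-(l : ℤ)) m = pbB (-(m : ℤ)) l := by
  rw [pbB_neg_eq_sum, pbB_neg_eq_sum]
  exact_mod_cast sum_signedSurj_mul_add_one_pow_comm l m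
end

section
/- For all nonnegative integers l and m, C_m^{(-l-1)} = C_l^{(-m-1)}, where C_n^{(k)} are the poly-Bernoulli numbers of C-type. -/
open PowerSeries Finset

/-!
Write `f = 1 - e^{-t}`. Since `f' = e^{-t} = 1 - f`, differentiating `f^(i+1)` gives the
recurrence of the Stirling numbers of the second kind, so `n! [t^n] f^i = (-1)^(n+i) i! S(n,i)`,
and hence `C_m^{(k)} = ∑_i (i+1)^{-k} (-1)^(m+i) i! S(m+1,i+1)`. For `k = -l-1`, expand
`(i+1)^(l+1) = ∑_j S(l+1,j+1) (j+1)! C(i+1,j+1)` in falling factorials and use the inversion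
formula `∑_i (-1)^(m+i) i! C(i+1,j+1) S(m+1,i+1) = j! S(m+1,j+1)`. This gives
`C_m^{(-l-1)} = ∑_j j! (j+1)! S(l+1,j+1) S(m+1,j+1)`, which is symmetric in `l` and `m`.
-/

open Nat (stirlingSecond stirlingSecond_succ_succ stirlingSecond_eq_zero_of_lt)
open scoped Nat

theorem X_mul_descPochhammer (R : Type*) [Ring R] (k : ℕ) :
    (Polynomial.X : Polynomial R) * descPochhammer R k =
      descPochhammer R (k + 1) + k * descPochhammer R k := by
  rw [descPochhammer_succ_right, mul_sub, (Polynomial.commute_X _).eq, (Nat.cast_commute k _).eq]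
  abel

theorem X_pow_eq_sum_stirlingSecond_mul_descPochhammer (R : Type*) [Ring R] (n : ℕ) :
    (Polynomial.X : Polynomial R) ^ n =
      ∑ k ∈ range (n + 1), (stirlingSecond n k : Polynomial R) * descPochhammer R k := by
  induction n with
  | zero => simp
  | succ n ih =>
    have X_mul (k : ℕ) :
        Polynomial.X * ((stirlingSecond n k : Polynomial R) * descPochhammer R k) =
          (stirlingSecond n k : Polynomial R) * descPochhammer R (k + 1) +
            ((stirlingSecond n k * k : ℕ) : Polynomial R) * descPochhammer R k := by
      rw [← mul_assoc, ← (Nat.cast_commute _ _).eq, mul_assoc, X_mul_descPochhammer, mul_add,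
        ← mul_assoc, Nat.cast_mul]
    have shift :
        ∑ k ∈ range (n + 1),
            ((stirlingSecond n k * k : ℕ) : Polynomial R) * descPochhammer R k =
          ∑ k ∈ range (n + 1), ((stirlingSecond n (k + 1) * (k + 1) : ℕ) : Polynomial R) *
            descPochhammer R (k + 1) := by
      rw [sum_range_succ', sum_range_succ, stirlingSecond_eq_zero_of_lt n.lt_succ_self]
      simp
    rw [pow_succ', ih, mul_sum, sum_congr rfl fun k _ => X_mul k, sum_add_distrib, shift,
      ← sum_add_distrib, sum_range_succ' _ (n + 1)]
    simp only [stirlingSecond_succ_succ, Nat.stirlingSecond_succ_zero, Nat.cast_zero, zero_mul,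
      add_zero, ← add_mul, ← Nat.cast_add]
    exact sum_congr rfl fun k _ => by rw [add_comm, mul_comm]

theorem coeff_expNegQ (n : ℕ) : coeff n expNegQ = (-1) ^ n / n ! := by
  simp [expNegQ, expQ, coeff_rescale, coeff_exp, mul_comm, div_eq_inv_mul]

theorem constantCoeff_one_sub_expNegQ : constantCoeff (1 - expNegQ) = 0 := by
  rw [map_sub, map_one, ← coeff_zero_eq_constantCoeff_apply, coeff_expNegQ]
  simp

theorem derivative_one_sub_expNegQ : d⁄dX ℚ (1 - expNegQ) = expNegQ := by
  ext n
  rw [coeff_derivative, map_sub, coeff_one, coeff_expNegQ, coeff_expNegQ, Nat.factorial_succ]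
  push_cast
  field_simp
  ring

theorem coeff_succ_one_sub_expNegQ_pow_succ (n i : ℕ) :
    coeff (n + 1) ((1 - expNegQ) ^ (i + 1)) * ((n : ℚ) + 1) =
      ((i : ℚ) + 1) * (coeff n ((1 - expNegQ) ^ i) - coeff n ((1 - expNegQ) ^ (i + 1))) := by
  have h : d⁄dX ℚ ((1 - expNegQ) ^ (i + 1)) =
      (i + 1 : ℚ) • ((1 - expNegQ) ^ i - (1 - expNegQ) ^ (i + 1)) := by
    rw [derivative_pow, derivative_one_sub_expNegQ, Nat.add_sub_cancel, smul_eq_C_mul, map_add,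
      map_natCast, map_one]
    push_cast
    ring
  rw [← coeff_derivative, h, coeff_smul, map_sub, smul_eq_mul]

theorem factorial_mul_coeff_one_sub_expNegQ_pow (n i : ℕ) :
    (n ! : ℚ) * coeff n ((1 - expNegQ) ^ i) = (-1) ^ (n + i) * i ! * stirlingSecond n i := by
  induction n generalizing i with
  | zero =>
    cases i <;> simp [constantCoeff_one_sub_expNegQ]
  | succ n ih =>
    cases i with
    | zero => simp [coeff_one]
    | succ i =>
      calc ((n + 1) ! : ℚ) * coeff (n + 1) ((1 - expNegQ) ^ (i + 1))
          = n ! * (coeff (n + 1) ((1 - expNegQ) ^ (i + 1)) * (n + 1)) := by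
            push_cast [Nat.factorial_succ]; ring
        _ = (i + 1) * (n ! * coeff n ((1 - expNegQ) ^ i) -
              n ! * coeff n ((1 - expNegQ) ^ (i + 1))) := by
            rw [coeff_succ_one_sub_expNegQ_pow_succ]; ring
        _ = _ := by
            rw [ih, ih, stirlingSecond_succ_succ, Nat.factorial_succ]
            push_cast
            ring

def pbCWeight (m i : ℕ) : ℤ := (-1) ^ (m + i) * i ! * stirlingSecond (m + 1) (i + 1)

theorem factorial_mul_coeff_expNegQ_mul_one_sub_expNegQ_pow (m i : ℕ) :
    (m ! : ℚ) * coeff m (expNegQ * (1 - expNegQ) ^ i) = pbCWeight m i := by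
  rw [show expNegQ * (1 - expNegQ) ^ i = (1 - expNegQ) ^ i - (1 - expNegQ) ^ (i + 1) by ring,
    map_sub, mul_sub, factorial_mul_coeff_one_sub_expNegQ_pow,
    factorial_mul_coeff_one_sub_expNegQ_pow, pbCWeight, stirlingSecond_succ_succ,
    Nat.factorial_succ]
  push_cast
  ring

theorem coeff_liEGF_eq_coeff_sum (k : ℤ) {b N : ℕ} (hb : b ≤ N) :
    coeff b (liEGF k) =
      coeff b (∑ i ∈ range (N + 1), C (((i : ℚ) + 1) ^ (-k)) * (1 - expNegQ) ^ i) := by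
  have vanish {i : ℕ} (hi : b < i) : coeff b ((1 - expNegQ) ^ i) = 0 :=
    X_pow_dvd_iff.mp (pow_dvd_pow_of_dvd (X_dvd_iff.mpr constantCoeff_one_sub_expNegQ) i) b hi
  rw [liEGF, coeff_mk, map_sum]
  simp only [coeff_C_mul]
  exact sum_subset (range_subset_range.mpr (by omega)) fun i _ hi =>
    by rw [vanish (by simpa using hi), mul_zero]

theorem pbC_eq_sum (k : ℤ) (m : ℕ) :
    pbC k m = ∑ i ∈ range (m + 1), ((i : ℚ) + 1) ^ (-k) * pbCWeight m i := by
  have trunc : coeff m (expNegQ * liEGF k) = coeff m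
      (expNegQ * ∑ i ∈ range (m + 1), C (((i : ℚ) + 1) ^ (-k)) * (1 - expNegQ) ^ i) := by
    simp only [coeff_mul]
    exact sum_congr rfl fun p hp => by
      rw [coeff_liEGF_eq_coeff_sum k (HasAntidiagonal.antidiagonal.snd_le hp)]
  change (m ! : ℚ) * coeff m (expNegQ * liEGF k) = _
  rw [trunc, mul_sum, map_sum, mul_sum]
  refine sum_congr rfl fun i _ => ?_
  rw [mul_left_comm, coeff_C_mul, ← factorial_mul_coeff_expNegQ_mul_one_sub_expNegQ_pow]
  ring

theorem Nat.mul_choose_eq_add (n k : ℕ) :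
    n * n.choose k = (k + 1) * n.choose (k + 1) + k * n.choose k := by
  rcases le_or_gt k n with h | h
  · rw [mul_comm (k + 1), Nat.choose_succ_right_eq, mul_comm k, ← mul_add, Nat.sub_add_cancel h,
      mul_comm]
  · simp [Nat.choose_eq_zero_of_lt h, Nat.choose_eq_zero_of_lt (h.trans k.lt_succ_self)]

theorem sum_choose_mul_pbCWeight_succ (m j : ℕ) :
    ∑ i ∈ range (m + 2), ((i + 1).choose (j + 1) : ℤ) * pbCWeight (m + 1) i =
      ∑ i ∈ range (m + 1), ((i + 1) * (i + 1).choose j : ℤ) * pbCWeight m i := by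
  have low : ∑ i ∈ range (m + 2), ((i + 1).choose (j + 1) : ℤ) * ((-1) ^ (m + 1 + i) * i ! *
      stirlingSecond (m + 1) i) = ∑ i ∈ range (m + 1),
        ((i + 1 + 1).choose (j + 1) : ℤ) * ((i + 1) * pbCWeight m i) := by
    rw [sum_range_succ', Nat.stirlingSecond_succ_zero, Nat.cast_zero, mul_zero, mul_zero, add_zero]
    refine sum_congr rfl fun i _ => ?_
    rw [pbCWeight, Nat.factorial_succ, show m + 1 + (i + 1) = m + i + 2 by ring, pow_add,
      neg_one_sq]
    push_cast
    ring
  have high : ∑ i ∈ range (m + 2), ((i + 1).choose (j + 1) : ℤ) * ((-1) ^ (m + 1 + i) * i ! *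
      ((i + 1) * stirlingSecond (m + 1) (i + 1))) = - ∑ i ∈ range (m + 1),
        ((i + 1).choose (j + 1) : ℤ) * ((i + 1) * pbCWeight m i) := by
    rw [sum_range_succ, stirlingSecond_eq_zero_of_lt (by omega : m + 1 < m + 1 + 1),
      ← sum_neg_distrib]
    simp only [Nat.cast_zero, mul_zero, add_zero, pbCWeight]
    exact sum_congr rfl fun i _ => by ring
  calc _ = ∑ i ∈ range (m + 2), ((i + 1).choose (j + 1) : ℤ) * ((-1) ^ (m + 1 + i) * i ! *
          stirlingSecond (m + 1) i) + ∑ i ∈ range (m + 2), ((i + 1).choose (j + 1) : ℤ) *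
            ((-1) ^ (m + 1 + i) * i ! * ((i + 1) * stirlingSecond (m + 1) (i + 1))) := by
        rw [← sum_add_distrib]
        refine sum_congr rfl fun i _ => ?_
        rw [pbCWeight, stirlingSecond_succ_succ]
        push_cast
        ring
    _ = _ := by
        rw [low, high, ← sub_eq_add_neg, ← sum_sub_distrib]
        refine sum_congr rfl fun i _ => ?_
        rw [Nat.choose_succ_succ' (i + 1) j]
        push_cast
        ring

theorem sum_choose_mul_pbCWeight (m j : ℕ) :
    ∑ i ∈ range (m + 1), ((i + 1).choose (j + 1) : ℤ) * pbCWeight m i =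
      j ! * stirlingSecond (m + 1) (j + 1) := by
  induction m generalizing j with
  | zero =>
    cases j with
    | zero => simp [pbCWeight]
    | succ j => simp [Nat.choose_eq_zero_of_lt, stirlingSecond_eq_zero_of_lt]
  | succ m ih =>
    have split (i : ℕ) : ((i + 1) * (i + 1).choose j : ℤ) =
        (j + 1) * (i + 1).choose (j + 1) + j * (i + 1).choose j := by
      exact_mod_cast Nat.mul_choose_eq_add (i + 1) j
    simp only [sum_choose_mul_pbCWeight_succ, split, add_mul, mul_assoc, sum_add_distrib,
      ← mul_sum, ih j]
    cases j with
    | zero => simp [stirlingSecond_succ_succ]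
    | succ j =>
      rw [ih j, stirlingSecond_succ_succ (m + 1) (j + 1), Nat.factorial_succ]
      push_cast
      ring

theorem pbC_neg_sub_one_eq_sum (l m : ℕ) :
    pbC (-(l : ℤ) - 1) m = ∑ j ∈ range (l + 1),
      (j ! * (j + 1)! * stirlingSecond (l + 1) (j + 1) * stirlingSecond (m + 1) (j + 1) : ℚ) := by
  have pow_expand (i : ℕ) : ((i : ℚ) + 1) ^ (-(-(l : ℤ) - 1)) = ∑ j ∈ range (l + 1),
      (stirlingSecond (l + 1) (j + 1) * (j + 1)! * (i + 1).choose (j + 1) : ℚ) := by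
    have h := congrArg (Polynomial.eval ((i + 1 : ℕ) : ℚ))
      (X_pow_eq_sum_stirlingSecond_mul_descPochhammer ℚ (l + 1))
    simp only [Polynomial.eval_pow, Polynomial.eval_X, Polynomial.eval_finsetSum,
      Polynomial.eval_mul, Polynomial.eval_natCast, descPochhammer_eval_eq_descFactorial,
      Nat.descFactorial_eq_factorial_mul_choose] at h
    rw [sum_range_succ'] at h
    rw [show -(-(l : ℤ) - 1) = ((l + 1 : ℕ) : ℤ) by push_cast; ring, zpow_natCast]
    simpa [mul_assoc] using h
  rw [pbC_eq_sum]
  simp only [pow_expand, sum_mul]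
  rw [sum_comm]
  refine sum_congr rfl fun j _ => ?_
  have h : ∑ i ∈ range (m + 1), ((i + 1).choose (j + 1) : ℚ) * pbCWeight m i =
      j ! * stirlingSecond (m + 1) (j + 1) := by
    exact_mod_cast sum_choose_mul_pbCWeight m j
  simp only [mul_assoc, ← mul_sum, h]
  ring

/-- Duality for C-type poly-Bernoulli numbers: C_m^{(-l-1)} = C_l^{(-m-1)}. -/
theorem polyBernoulliC_duality (l m : ℕ) : pbC (-(l : ℤ) - 1) m = pbC (-(m : ℤ) - 1) l := by
  have extend (a b : ℕ) : pbC (-(a : ℤ) - 1) b = ∑ j ∈ range (a + b + 1),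
      (j ! * (j + 1)! * stirlingSecond (a + 1) (j + 1) * stirlingSecond (b + 1) (j + 1) : ℚ) := by
    rw [pbC_neg_sub_one_eq_sum]
    refine sum_subset (range_subset_range.mpr (by omega)) fun j _ hj => ?_
    rw [stirlingSecond_eq_zero_of_lt (by simp at hj; omega : a + 1 < j + 1)]
    simp
  rw [extend, extend, add_comm m l]
  exact sum_congr rfl fun j _ => by ring
end

section
/- For nonnegative integers n, r with r \ge n, the exponential generating function identity e^{nt}(e^t-1)^{r-n}/(r-n)! = \sum_{m\ge 0} (\sum_{i=0}^{n} (-1)^{n-i} [n choose_1 i] {m+i choose_2 r}) t^m/m! holds, where [· ·] denotes unsigned Stirling numbers of the first kind and {· ·} Stirling numbers of the second kind. -/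
open PowerSeries Finset

/-!
Write `F n k = e^{nt} (e^t - 1)^k / k!`. Differentiating gives `F (n + 1) k = (D - n) F n (k + 1)`,
so `F n (r - n) = (D - n + 1)⋯(D - 1) D F 0 r`. On exponential generating functions `D` acts as
the shift `E` of coefficients, and `x (x - 1)⋯(x - n + 1) = ∑ᵢ (-1)^(n-i) [n i] xⁱ`, so it only
remains to know that `F 0 r` generates `m ↦ {m r}`. That follows by induction on `r`: both satisfy
`(D - r - 1) y = F 0 r` (for `{· ·}` this is its recurrence), and a solution of `y' = c y + g` is
determined by its constant term.
-/

namespace PowerSeries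

theorem eq_zero_of_derivative_eq_smul {R : Type*} [CommRing R] [IsAddTorsionFree R] {c : R}
    {f : R⟦X⟧} (hD : d⁄dX R f = c • f) (hc : constantCoeff f = 0) : f = 0 := by
  ext m
  rw [map_zero]
  induction m with
  | zero => simpa using hc
  | succ m ih =>
    have hm := congrArg (coeff m) hD
    rw [coeff_derivative, map_smul, ih, smul_zero, mul_comm, ← Nat.cast_succ, ← nsmul_eq_mul]
      at hm
    exact (nsmul_eq_zero_iff_right m.succ_ne_zero).mp hm

theorem eq_of_derivative_sub_smul_eq {R : Type*} [CommRing R] [IsAddTorsionFree R] {c : R}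
    {f g : R⟦X⟧} (hD : d⁄dX R f - c • f = d⁄dX R g - c • g)
    (hc : constantCoeff f = constantCoeff g) : f = g := by
  refine sub_eq_zero.mp (eq_zero_of_derivative_eq_smul (c := c) ?_ (by simp [hc]))
  rw [map_sub, smul_sub]
  linear_combination hD

theorem derivative_exp_pow {A : Type*} [CommRing A] [Algebra ℚ A] (n : ℕ) :
    d⁄dX A (exp A ^ n) = n * exp A ^ n := by
  rw [derivative_pow, derivative_exp]
  cases n <;> simp [pow_succ, mul_assoc]

variable {K : Type*} [Field K]

def egf : (ℕ → K) →ₗ[K] K⟦X⟧ where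
  toFun a := mk fun m => a m / m.factorial
  map_add' a b := by ext; simp [add_div]
  map_smul' c a := by ext; simp [mul_div_assoc]

theorem coeff_egf (a : ℕ → K) (m : ℕ) : coeff m (egf a) = a m / m.factorial := by
  simp [egf]

theorem constantCoeff_egf (a : ℕ → K) : constantCoeff (egf a) = a 0 := by
  simp [← coeff_zero_eq_constantCoeff_apply, coeff_egf]

variable [CharZero K]

theorem derivative_egf (a : ℕ → K) : d⁄dX K (egf a) = egf fun m => a (m + 1) := by
  ext m
  rw [coeff_derivative, coeff_egf, coeff_egf, Nat.factorial_succ]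
  push_cast
  field_simp

end PowerSeries

section

variable {R : Type*} [CommRing R]

theorem stirling1_eq_stirlingFirst : ∀ n k, stirling1 n k = Nat.stirlingFirst n k
  | 0, 0 | 0, _ + 1 | _ + 1, 0 => rfl
  | n + 1, k + 1 => by
    rw [stirling1, Nat.stirlingFirst_succ_succ, stirling1_eq_stirlingFirst n k,
      stirling1_eq_stirlingFirst n (k + 1), add_comm]

variable (R) in
/-- The truncated `n - i` is harmless: `stirling1 n i = 0` for `i > n`. -/
def signedStirling1 (n i : ℕ) : R := (-1) ^ (n - i) * stirling1 n i

theorem signedStirling1_succ_succ (n i : ℕ) :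
    signedStirling1 R (n + 1) (i + 1) =
      signedStirling1 R n i - n * signedStirling1 R n (i + 1) := by
  simp only [signedStirling1, stirling1_eq_stirlingFirst, Nat.stirlingFirst_succ_succ,
    Nat.add_sub_add_right]
  rcases lt_or_ge i n with hi | hi
  · rw [show n - i = n - (i + 1) + 1 by omega]
    push_cast
    ring
  · rw [Nat.stirlingFirst_eq_zero_of_lt (by omega : n < i + 1)]
    push_cast
    ring

theorem signedStirling1_succ_zero (n : ℕ) : signedStirling1 R (n + 1) 0 = 0 := by
  simp [signedStirling1, stirling1]

theorem natCast_mul_signedStirling1_zero (n : ℕ) : (n : R) * signedStirling1 R n 0 = 0 := by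
  cases n <;> simp [signedStirling1_succ_zero]

theorem signedStirling1_of_lt {n i : ℕ} (h : n < i) : signedStirling1 R n i = 0 := by
  simp [signedStirling1, stirling1_eq_stirlingFirst, Nat.stirlingFirst_eq_zero_of_lt h]

/-- `E(E - 1)⋯(E - n + 1) a` for the shift operator `E a = fun m => a (m + 1)`. -/
def descPochhammerShift (n : ℕ) (a : ℕ → R) : ℕ → R :=
  fun m => ∑ i ∈ range (n + 1), signedStirling1 R n i * a (m + i)

theorem descPochhammerShift_succ (n : ℕ) (a : ℕ → R) :
    descPochhammerShift (n + 1) a =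
      (fun m => descPochhammerShift n a (m + 1)) - (n : R) • descPochhammerShift n a := by
  ext m
  have hshift : ∑ i ∈ range (n + 1), signedStirling1 R n (i + 1) * a (m + (i + 1)) =
      descPochhammerShift n a m - signedStirling1 R n 0 * a m := by
    have h := sum_range_succ' (fun i => signedStirling1 R n i * a (m + i)) (n + 1)
    rw [sum_range_succ, signedStirling1_of_lt (lt_add_one n), zero_mul, add_zero, add_zero] at h
    rw [descPochhammerShift, h, add_sub_cancel_right]
  simp only [descPochhammerShift, Pi.sub_apply, Pi.smul_apply, smul_eq_mul]
  rw [sum_range_succ', signedStirling1_succ_zero, zero_mul, add_zero]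
  simp only [signedStirling1_succ_succ, sub_mul, sum_sub_distrib, mul_assoc, ← mul_sum]
  rw [hshift, mul_sub, ← mul_assoc, natCast_mul_signedStirling1_zero, zero_mul, sub_zero]
  simp only [← add_assoc, add_right_comm m 1]
  rfl

end

section

variable (K : Type*) [Field K] [CharZero K]

/-- The exponential generating function of the `n`-Stirling numbers `{m + n, k + n}_n` of the
second kind. -/
noncomputable def rStirlingEgf (n k : ℕ) : K⟦X⟧ :=
  (k.factorial : K)⁻¹ • (exp K ^ n * (exp K - 1) ^ k)

theorem natCast_succ_mul_inv_factorial_succ (k : ℕ) :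
    ((k + 1 : ℕ) : K) * ((k + 1).factorial : K)⁻¹ = (k.factorial : K)⁻¹ := by
  rw [Nat.factorial_succ, Nat.cast_mul, mul_inv, ← mul_assoc,
    mul_inv_cancel₀ (Nat.cast_ne_zero.mpr k.succ_ne_zero), one_mul]

theorem rStirlingEgf_succ_left (n k : ℕ) :
    rStirlingEgf K (n + 1) k =
      ((k + 1 : ℕ) : K) • rStirlingEgf K n (k + 1) + rStirlingEgf K n k := by
  rw [rStirlingEgf, rStirlingEgf, rStirlingEgf, smul_smul, natCast_succ_mul_inv_factorial_succ,
    ← smul_add]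
  ring_nf

theorem derivative_rStirlingEgf (n k : ℕ) :
    d⁄dX K (rStirlingEgf K n (k + 1)) =
      (n : K) • rStirlingEgf K n (k + 1) + rStirlingEgf K (n + 1) k := by
  have hfac : C ((k + 1 : ℕ) : K) * C ((k + 1).factorial : K)⁻¹ = C (k.factorial : K)⁻¹ := by
    rw [← map_mul, natCast_succ_mul_inv_factorial_succ]
  rw [rStirlingEgf, Derivation.map_smul, Derivation.leibniz, derivative_exp_pow, derivative_pow,
    map_sub, derivative_exp, derivative_one, sub_zero, Nat.add_sub_cancel]
  simp only [rStirlingEgf, smul_eq_mul, smul_eq_C_mul, ← map_natCast (C (R := K))]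
  linear_combination (exp K ^ (n + 1) * (exp K - 1) ^ k) * hfac

theorem rStirlingEgf_zero_left (r : ℕ) :
    rStirlingEgf K 0 r = egf fun m => (stirling2 m r : K) := by
  induction r with
  | zero =>
    ext (_ | m) <;> simp [rStirlingEgf, coeff_egf, stirling2]
  | succ r ih =>
    refine eq_of_derivative_sub_smul_eq (c := ((r + 1 : ℕ) : K)) ?_ ?_
    · rw [derivative_rStirlingEgf, rStirlingEgf_succ_left, ih, Nat.cast_zero, zero_smul, zero_add,
        add_sub_cancel_left, derivative_egf, ← map_smul, ← map_sub]
      congr 1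
      ext m
      simp only [Pi.sub_apply, Pi.smul_apply, smul_eq_mul, stirling2]
      push_cast
      ring
    · simp [rStirlingEgf, constantCoeff_egf, stirling2]

theorem rStirlingEgf_eq_egf_descPochhammerShift {n r : ℕ} (h : n ≤ r) :
    rStirlingEgf K n (r - n) = egf (descPochhammerShift n fun m => (stirling2 m r : K)) := by
  induction n with
  | zero =>
    rw [Nat.sub_zero, rStirlingEgf_zero_left]
    congr 1
    ext m
    simp [descPochhammerShift, signedStirling1, stirling1]
  | succ n ih =>
    obtain ⟨k, hk⟩ : ∃ k, r - n = k + 1 := ⟨r - (n + 1), by omega⟩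
    have hF : rStirlingEgf K (n + 1) k =
        d⁄dX K (rStirlingEgf K n (k + 1)) - (n : K) • rStirlingEgf K n (k + 1) := by
      rw [derivative_rStirlingEgf, add_sub_cancel_left]
    rw [show r - (n + 1) = k by omega, hF, ← hk, ih (by omega), derivative_egf, ← map_smul,
      ← map_sub, descPochhammerShift_succ]

end

/-- e^{nt}(e^t-1)^{r-n}/(r-n)! = ∑_m (∑_{i=0}^n (-1)^{n-i} [n,i] {m+i,r}) t^m/m!. -/
theorem takeda_first (n r : ℕ) (h : n ≤ r) :
    ((r - n).factorial : ℚ)⁻¹ •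
        ((PowerSeries.exp ℚ) ^ n * (PowerSeries.exp ℚ - 1) ^ (r - n)) =
      PowerSeries.mk fun m =>
        (∑ i ∈ range (n + 1),
          (-1 : ℚ) ^ (n - i) * (stirling1 n i : ℚ) * (stirling2 (m + i) r : ℚ)) /
          m.factorial :=
  rStirlingEgf_eq_egf_descPochhammerShift ℚ h
end

section
/- Let G(u,t) = e^u/(1 - e^u(1-e^t)) and G_n(u,t) = e^{nt} \sum_{j=0}^{n} [n choose_1 j] (\partial^j/\partial u^j) G(u,t). Then G_n(u,t) = e^{-nu} \sum_{m\ge 1} ((m+n-1)!/(m-1)!) e^{-mt} (1-e^{-u})^{m-1}. -/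
open PowerSeries Finset

/-- e^u viewed in ℚ[[t]][[u]] (outer variable u). -/
noncomputable def eU : PowerSeries (PowerSeries ℚ) := PowerSeries.exp (PowerSeries ℚ)

/-- e^{-u} viewed in ℚ[[t]][[u]]. -/
noncomputable def eNegU : PowerSeries (PowerSeries ℚ) := rescale (-1) eU

/-- G(u,t) = e^u/(1 - e^u(1-e^t)), as an element of ℚ[[t]][[u]]. -/
noncomputable def Gser : PowerSeries (PowerSeries ℚ) :=
  eU * Ring.inverse (1 - eU * (1 - PowerSeries.C expQ))

/-- G_n(u,t) = e^{nt} ∑_{j=0}^n [n,j] ∂^j/∂u^j G(u,t). -/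
noncomputable def Gnser (n : ℕ) : PowerSeries (PowerSeries ℚ) :=
  PowerSeries.C (expQ ^ n) *
    ∑ j ∈ range (n + 1), (stirling1 n j : ℚ) • (derivativeFun^[j] Gser)

/-!
Put `y = e^{-t}(1 - e^{-u})`, so that `G = e^{-t} (1 - y)⁻¹`. The recursion of the Stirling
numbers says that `∑ⱼ [n, j] ∂ʲ` is the operator `∂(∂ + 1)⋯(∂ + n - 1)`, and since
`(∂ + n)(e^{-nu} (1 - y)^{-(n+1)}) = (n + 1) e^{-t} e^{-(n+1)u} (1 - y)^{-(n+2)}`,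
induction on `n` gives the closed form `G_n = n! e^{-t} e^{-nu} (1 - y)^{-(n+1)}`.
Expanding `(1 - y)^{-(n+1)} = ∑ₘ C(n + m, n) yᵐ`, a substitution of `y` (which has no constant
term in `u`) into a power series, gives the coefficients.
-/

open scoped Nat

section Substitution

variable {R A : Type*} [CommRing R] [CommRing A] [Algebra R A]

theorem X_pow_dvd_subst_sub_sum_range {y : A⟦X⟧} (hy : constantCoeff y = 0) (f : R⟦X⟧)
    (j : ℕ) :
    X ^ j ∣ subst y f - ∑ m ∈ range j, coeff m f • y ^ m := by
  have hs : HasSubst y := HasSubst.of_constantCoeff_zero' hy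
  have hpoly : subst y (f.trunc j : R⟦X⟧) = ∑ m ∈ range j, coeff m f • y ^ m := by
    rw [subst_coe hs, Polynomial.aeval_def, eval₂_trunc_eq_sum_range]
    simp only [Algebra.smul_def]
  nth_rw 1 [eq_X_pow_mul_shift_add_trunc j f]
  rw [subst_add hs, subst_mul hs, subst_pow hs, subst_X hs, hpoly, add_sub_cancel_right]
  exact (pow_dvd_pow_of_dvd (X_dvd_iff.mpr hy) j).mul_right _

theorem coeff_mul_subst {y : A⟦X⟧} (hy : constantCoeff y = 0) (f : R⟦X⟧) (z : A⟦X⟧)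
    (j : ℕ) :
    coeff j (z * subst y f) = ∑ m ∈ range (j + 1), coeff m f • coeff j (z * y ^ m) := by
  obtain ⟨q, hq⟩ := X_pow_dvd_subst_sub_sum_range (R := R) hy f (j + 1)
  rw [sub_eq_iff_eq_add] at hq
  rw [hq, mul_add, map_add, mul_left_comm, X_pow_dvd_iff.mp (dvd_mul_right _ _) j j.lt_succ_self,
    zero_add, mul_sum, map_sum]
  refine sum_congr rfl fun m _ => ?_
  rw [mul_smul_comm, LinearMap.map_smul_of_tower]

end Substitution

theorem stirling1_eq_zero_of_lt : ∀ {n k : ℕ}, n < k → stirling1 n k = 0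
  | 0, _ + 1, _ => rfl
  | n + 1, k + 1, h => by
    rw [stirling1, stirling1_eq_zero_of_lt (by omega), stirling1_eq_zero_of_lt (by omega),
      mul_zero, add_zero]

theorem stirling1_succ_zero (n : ℕ) : stirling1 (n + 1) 0 = 0 := rfl

section StirlingSum

variable {M F : Type*} [AddCommMonoid M] [FunLike F M M] [AddMonoidHomClass F M M] (f : F)

theorem sum_stirling1_succ_smul_iterate (n : ℕ) (g : M) :
    ∑ j ∈ range (n + 2), stirling1 (n + 1) j • f^[j] g =
      f (∑ j ∈ range (n + 1), stirling1 n j • f^[j] g) +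
        n • ∑ j ∈ range (n + 1), stirling1 n j • f^[j] g := by
  have hshift : n • ∑ j ∈ range (n + 1), stirling1 n j • f^[j] g =
      ∑ j ∈ range (n + 1), (n * stirling1 n (j + 1)) • f^[j + 1] g := by
    rw [smul_sum, sum_range_succ', sum_range_succ, stirling1_eq_zero_of_lt n.lt_succ_self]
    cases n <;> simp [mul_smul, stirling1_succ_zero]
  rw [sum_range_succ', stirling1_succ_zero, zero_smul, add_zero, hshift, map_sum,
    ← sum_add_distrib]
  refine sum_congr rfl fun j _ => ?_
  rw [stirling1, add_smul, map_nsmul, Function.iterate_succ_apply']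

end StirlingSum

section Derivative

variable {A : Type*} [CommRing A]

theorem derivative_rescale (a : A) (f : A⟦X⟧) :
    d⁄dX A (rescale a f) = C a * rescale a (d⁄dX A f) := by
  ext n
  simp only [coeff_derivative, coeff_rescale, coeff_C_mul, pow_succ]
  ring

theorem derivative_C_mul (a : A) (f : A⟦X⟧) : d⁄dX A (C a * f) = C a * d⁄dX A f := by
  rw [Derivation.leibniz, derivative_C, smul_zero, add_zero, smul_eq_mul]

theorem derivative_eq_sq_mul_of_mul_one_sub_eq_one {w y : A⟦X⟧} (h : w * (1 - y) = 1) :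
    d⁄dX A w = w ^ 2 * d⁄dX A y := by
  rw [(d⁄dX A).leibniz_of_mul_eq_one h, map_sub, Derivation.map_one_eq_zero, smul_eq_mul]
  ring

theorem derivative_rescale_neg_one_exp [Algebra ℚ A] :
    d⁄dX A (rescale (-1) (exp A)) = -rescale (-1) (exp A) := by
  rw [derivative_rescale, derivative_exp, map_neg, map_one]
  ring

end Derivative

section ClosedForm

variable {A : Type*} [CommRing A] {e w : A⟦X⟧} {c : A}

theorem derivative_pow_mul_pow_add_nsmul (he : d⁄dX A e = -e)
    (hw : d⁄dX A w = C c * e * w ^ 2) (n : ℕ) :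
    d⁄dX A (e ^ n * w ^ (n + 1)) + n • (e ^ n * w ^ (n + 1)) =
      (n + 1) • (C c * e ^ (n + 1) * w ^ (n + 2)) := by
  rw [Derivation.leibniz, Derivation.leibniz_pow, Derivation.leibniz_pow, he, hw]
  cases n <;> simp only [smul_eq_mul, nsmul_eq_mul] <;> push_cast <;> ring

theorem sum_stirling1_smul_iterate_derivative (he : d⁄dX A e = -e)
    (hw : d⁄dX A w = C c * e * w ^ 2) (n : ℕ) :
    ∑ j ∈ range (n + 1), stirling1 n j • (d⁄dX A)^[j] (C c * w) =
      n ! • (C (c ^ (n + 1)) * (e ^ n * w ^ (n + 1))) := by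
  induction n with
  | zero => simp [stirling1]
  | succ n ih =>
    have key := derivative_pow_mul_pow_add_nsmul he hw n
    rw [sum_stirling1_succ_smul_iterate, ih, map_nsmul, derivative_C_mul]
    simp only [nsmul_eq_mul, map_pow] at key ⊢
    push_cast [Nat.factorial_succ] at key ⊢
    linear_combination (n ! * C c ^ (n + 1)) * key

end ClosedForm

noncomputable def Yser : ℚ⟦X⟧⟦X⟧ := C expNegQ * (1 - eNegU)

noncomputable def invOneSubYser : ℚ⟦X⟧⟦X⟧ := subst Yser (mk 1 : ℚ⟦X⟧)

theorem eNegU_mul_eU : eNegU * eU = 1 := by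
  rw [mul_comm]; exact exp_mul_exp_neg_eq_one

theorem expQ_mul_expNegQ : expQ * expNegQ = 1 := exp_mul_exp_neg_eq_one

theorem constantCoeff_eNegU : constantCoeff eNegU = 1 := by
  simp [eNegU, eU, ← coeff_zero_eq_constantCoeff_apply, coeff_rescale, coeff_exp]

theorem constantCoeff_Yser : constantCoeff Yser = 0 := by
  simp [Yser, constantCoeff_eNegU]

theorem hasSubst_Yser : HasSubst Yser := HasSubst.of_constantCoeff_zero' constantCoeff_Yser

theorem invOneSubYser_mul_one_sub_Yser : invOneSubYser * (1 - Yser) = 1 := by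
  have h := congrArg (substAlgHom hasSubst_Yser) (mk_one_mul_one_sub_eq_one ℚ)
  rwa [map_mul, map_sub, map_one, coe_substAlgHom, subst_X hasSubst_Yser] at h

theorem invOneSubYser_pow_succ (n : ℕ) :
    invOneSubYser ^ (n + 1) = subst Yser (mk fun m => (Nat.choose (n + m) n : ℚ)) := by
  rw [invOneSubYser, ← subst_pow hasSubst_Yser, mk_one_pow_eq_mk_choose_add]

theorem Gser_eq_C_mul : Gser = C expNegQ * invOneSubYser := by
  have hC : C expQ * C expNegQ = 1 := by rw [← map_mul, expQ_mul_expNegQ, map_one]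
  have hfactor : 1 - eU * (1 - C expQ) = (1 - Yser) * (eU * C expQ) := by
    unfold Yser
    linear_combination (eU * (1 - eNegU)) * hC - eNegU_mul_eU
  set a := (1 - Yser) * (eU * C expQ)
  have hinv : a * (invOneSubYser * (eNegU * C expNegQ)) = 1 := by
    linear_combination (eU * C expQ * eNegU * C expNegQ) * invOneSubYser_mul_one_sub_Yser
      + C expQ * C expNegQ * eNegU_mul_eU + hC
  have hinverse : Ring.inverse a = invOneSubYser * (eNegU * C expNegQ) := by
    rw [← mul_one (Ring.inverse a), ← hinv,
      Ring.inverse_mul_cancel_left _ _ (IsUnit.of_mul_eq_one _ hinv)]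
  rw [Gser, hfactor, hinverse]
  linear_combination (C expNegQ * invOneSubYser) * eNegU_mul_eU

theorem derivative_eNegU : d⁄dX ℚ⟦X⟧ eNegU = -eNegU := derivative_rescale_neg_one_exp

theorem derivative_invOneSubYser :
    d⁄dX ℚ⟦X⟧ invOneSubYser = C expNegQ * eNegU * invOneSubYser ^ 2 := by
  rw [derivative_eq_sq_mul_of_mul_one_sub_eq_one invOneSubYser_mul_one_sub_Yser, Yser,
    derivative_C_mul, map_sub, derivative_one, derivative_eNegU]
  ring

set_option linter.deprecated false in
theorem iterate_derivativeFun {R : Type*} [CommSemiring R] (j : ℕ) :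
    (derivativeFun : R⟦X⟧ → R⟦X⟧)^[j] = (d⁄dX R)^[j] := rfl

theorem Gnser_eq_smul (n : ℕ) :
    Gnser n = (n ! : ℚ) • (C expNegQ * eNegU ^ n * invOneSubYser ^ (n + 1)) := by
  have hC : C expQ ^ n * C expNegQ ^ n = 1 := by
    rw [← mul_pow, ← map_mul, expQ_mul_expNegQ, map_one, one_pow]
  simp only [Gnser, Nat.cast_smul_eq_nsmul, Gser_eq_C_mul, iterate_derivativeFun]
  rw [sum_stirling1_smul_iterate_derivative derivative_eNegU derivative_invOneSubYser n,
    mul_smul_comm, map_pow, map_pow]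
  linear_combination (n ! • (C expNegQ * eNegU ^ n * invOneSubYser ^ (n + 1))) * hC

theorem natCast_choose_mul_factorial (m n : ℕ) :
    ((n + m).choose n : ℚ) * n ! = (m + n) ! / m ! := by
  rw [eq_div_iff (by positivity), ← Nat.add_choose_mul_factorial_mul_factorial m n, add_comm n m]
  push_cast
  ring

/-- Coefficientwise in `u`: the sum over `m` may stop at `m = j` because
`e^{-nu}(1-e^{-u})^m` has order `m` in `u`. -/
theorem Gnser_eq (n : ℕ) (j : ℕ) :
    coeff j (Gnser n) =
      ∑ m ∈ range (j + 1),
        (((m + n).factorial : ℚ) / (m.factorial : ℚ)) •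
          (expNegQ ^ (m + 1) *
            coeff j (eNegU ^ n * (1 - eNegU) ^ m)) := by
  rw [Gnser_eq_smul, LinearMap.map_smul_of_tower, invOneSubYser_pow_succ,
    coeff_mul_subst constantCoeff_Yser, smul_sum]
  refine sum_congr rfl fun m _ => ?_
  have hterm : C expNegQ * eNegU ^ n * Yser ^ m =
      C (expNegQ ^ (m + 1)) * (eNegU ^ n * (1 - eNegU) ^ m) := by
    rw [Yser, mul_pow, map_pow, pow_succ]; ring
  rw [coeff_mk, hterm, coeff_C_mul, ← natCast_choose_mul_factorial, mul_smul, smul_comm]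
end

section
/- For every positive integer n, \sum_{l=0}^{n} (-1)^l B_{n-l}^{(-l)} = 0. -/
open PowerSeries Finset

/-! Since `(e^t - 1)^i = i! ∑_m S(m,i) t^m/m!` and `1 - e^{-t}` is `e^t - 1` with `t ↦ -t`,
negated, the defining series gives `B_m^{(-l)} = ∑_i (-1)^(m+i) i! (i+1)^l S(m,i)`. In the
alternating sum the sum over `l` then collapses by `S(n+1,i+1) = ∑_l (i+1)^l S(n-l,i)`, leaving
`(-1)^n ∑_i (-1)^i i! S(n+1,i+1)`; by `S(n+1,i+1) = (i+1) S(n,i+1) + S(n,i)` this sum telescopes to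
`S(n,0)`, which vanishes for `n ≥ 1`. -/

open Nat

namespace Nat

theorem stirlingSecond_succ_succ_eq_sum (n k : ℕ) :
    stirlingSecond (n + 1) (k + 1) =
      ∑ l ∈ range (n + 1), (k + 1) ^ l * stirlingSecond (n - l) k := by
  induction n with
  | zero => simp [stirlingSecond_succ_succ]
  | succ n ih =>
    rw [stirlingSecond_succ_succ, ih, sum_range_succ' _ (n + 1), mul_sum]
    simp [pow_succ, mul_comm, mul_left_comm]

theorem sum_neg_one_pow_mul_factorial_mul_stirlingSecond_succ {R : Type*} [CommRing R] (n : ℕ) :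
    ∑ i ∈ range (n + 1), (-1 : R) ^ i * i ! * stirlingSecond (n + 1) (i + 1) =
      if n = 0 then 1 else 0 := by
  set g : ℕ → R := fun i => (-1) ^ i * i ! * stirlingSecond n i
  have hstep : ∀ i, (-1 : R) ^ i * i ! * stirlingSecond (n + 1) (i + 1) =
      -(g (i + 1) - g i) := by
    intro i
    simp only [g, stirlingSecond_succ_succ, factorial_succ]
    push_cast
    ring
  simp_rw [hstep, sum_neg_distrib, sum_range_sub, g, stirlingSecond_eq_zero_of_lt (lt_add_one n)]
  cases n <;> simp

theorem sum_range_mul_stirlingSecond_of_le {R : Type*} [CommSemiring R] (f : ℕ → R) {m N : ℕ}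
    (h : m ≤ N) :
    ∑ i ∈ range (m + 1), f i * stirlingSecond m i = ∑ i ∈ range (N + 1), f i * stirlingSecond m i :=
  sum_subset (range_subset_range.mpr (by omega)) fun i _ hi => by
    rw [stirlingSecond_eq_zero_of_lt (by simpa using hi), cast_zero, mul_zero]

end Nat

namespace PowerSeries

variable (A : Type*) [CommRing A] [Algebra ℚ A]

theorem derivative_exp_sub_one_pow (k : ℕ) :
    d⁄dX A ((exp A - 1) ^ (k + 1)) =
      (k + 1 : A) • ((exp A - 1) ^ (k + 1) + (exp A - 1) ^ k) := by
  rw [derivative_pow, map_sub, derivative_exp, derivative_one, sub_zero, add_tsub_cancel_right,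
    smul_eq_C_mul, map_add, map_one, map_natCast]
  push_cast
  ring

theorem factorial_mul_coeff_exp_sub_one_pow (n k : ℕ) :
    (n ! : A) * coeff n ((exp A - 1) ^ k) = k ! * stirlingSecond n k := by
  induction n generalizing k with
  | zero => cases k <;> simp
  | succ n ih =>
    cases k with
    | zero => simp [coeff_one]
    | succ k =>
      have h := congrArg (coeff n) (derivative_exp_sub_one_pow A k)
      rw [coeff_derivative, coeff_smul, map_add] at h
      have h1 := ih (k + 1)
      have h2 := ih k
      simp only [factorial_succ, stirlingSecond_succ_succ] at *
      push_cast at *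
      linear_combination (n ! : A) * h + (k + 1 : A) * h1 + (k + 1 : A) * h2

end PowerSeries

lemma pbB_eq_factorial_mul_coeff_liEGF (k : ℤ) (m : ℕ) : pbB k m = m ! * coeff m (liEGF k) := by
  rw [pbB, pbPoly, pbEGF, neg_zero, rescale_zero, RingHom.comp_apply, expQ, constantCoeff_exp,
    map_one, one_mul]

lemma coeff_one_sub_expNegQ_pow_s13 (m i : ℕ) :
    coeff m ((1 - expNegQ) ^ i) = (-1) ^ (m + i) * coeff m ((exp ℚ - 1) ^ i) := by
  have h : 1 - expNegQ = C (-1) * rescale (-1 : ℚ) (exp ℚ - 1) := by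
    rw [map_sub, map_one, expNegQ, expQ, map_neg, map_one]
    ring
  rw [h, mul_pow, ← map_pow, ← map_pow, coeff_C_mul, coeff_rescale, pow_add]
  ring

lemma pbB_neg_natCast_eq_sum (l m : ℕ) :
    pbB (-(l : ℤ)) m =
      ∑ i ∈ range (m + 1), (-1 : ℚ) ^ (m + i) * i ! * ((i : ℚ) + 1) ^ l * stirlingSecond m i := by
  rw [pbB_eq_factorial_mul_coeff_liEGF, liEGF, coeff_mk, mul_sum]
  refine sum_congr rfl fun i _ => ?_
  rw [neg_neg, zpow_natCast, coeff_one_sub_expNegQ_pow_s13]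
  linear_combination ((-1 : ℚ) ^ (m + i) * ((i : ℚ) + 1) ^ l) *
    factorial_mul_coeff_exp_sub_one_pow ℚ m i

theorem alternating_sum_polyBernoulli (n : ℕ) (hn : 1 ≤ n) :
    ∑ l ∈ range (n + 1), (-1 : ℚ) ^ l * pbB (-(l : ℤ)) (n - l) = 0 := by
  have hterm : ∀ l ∈ range (n + 1), (-1 : ℚ) ^ l * pbB (-(l : ℤ)) (n - l) =
      ∑ i ∈ range (n + 1),
        (-1 : ℚ) ^ (n + i) * i ! * ((i + 1 : ℚ) ^ l * stirlingSecond (n - l) i) := by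
    intro l hl
    have hsign : (-1 : ℚ) ^ l * (-1) ^ (n - l) = (-1) ^ n := by
      rw [← pow_add, Nat.add_sub_cancel' (mem_range_succ_iff.mp hl)]
    rw [pbB_neg_natCast_eq_sum, sum_range_mul_stirlingSecond_of_le _ (n.sub_le l), mul_sum]
    refine sum_congr rfl fun i _ => ?_
    linear_combination (-1 : ℚ) ^ i * i ! * stirlingSecond (n - l) i * ((i : ℚ) + 1) ^ l * hsign
  calc _ = ∑ i ∈ range (n + 1), (-1 : ℚ) ^ (n + i) * i ! *
          ∑ l ∈ range (n + 1), (i + 1 : ℚ) ^ l * stirlingSecond (n - l) i := by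
        rw [sum_congr rfl hterm, sum_comm]
        simp_rw [mul_sum]
    _ = (-1) ^ n * ∑ i ∈ range (n + 1), (-1 : ℚ) ^ i * i ! * stirlingSecond (n + 1) (i + 1) := by
        rw [mul_sum]
        refine sum_congr rfl fun i _ => ?_
        rw [stirlingSecond_succ_succ_eq_sum]
        push_cast
        ring
    _ = 0 := by
        rw [sum_neg_one_pow_mul_factorial_mul_stirlingSecond_succ, if_neg (by omega), mul_zero]
end

section
/- The power series g_1(x) = \sum_{n\ge 0} (2^{n+1}-2) B_n x^{n+1} in Q[[x]] satisfies the functional equation g_1(x/(1-2x)) = g_1(x) + 2x^3(x-2)/(1-x)^2, and it is the unique power series in x Q[[x]] satisfying this equation. -/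
/-!
Write `x/(1-2x) = x u` with `u = ∑ 2ⁿ xⁿ`, so that `(x u)^(m+1)` has coefficient
`2^(k-m) C(k,m)` at `x^(k+1)`. The coefficient of `x^(k+1)` in `g₁(x/(1-2x))` is then
`∑_m (2^(m+1) - 2) B_m 2^(k-m) C(k,m) = 2^(k+1) ∑_m C(k,m) B_m - 2 B_k(2)`, and
`∑_m C(k,m) B_m = B_k + [k = 1]`, `B_k(2) = B'_k + k` turn this into `(2^(k+1) - 2) B_k - 2k`,
matching `2x³(x-2)/(1-x)² = -2 ∑_{k≥2} k x^(k+1)`.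
For uniqueness, the difference of two solutions is a fixed point of the substitution
in `x ℚ⟦x⟧`, and `u'(0) ≠ 0` forces it to vanish.
-/

open PowerSeries Finset

/-- Formal substitution f(a) = ∑_n (coeff n f) aⁿ for a power series `a` of positive
  order, defined coefficientwise (the tail vanishes since aⁿ has order ≥ n). -/
noncomputable def substPS (a f : PowerSeries ℚ) : PowerSeries ℚ :=
  PowerSeries.mk fun j => ∑ n ∈ range (j + 1), coeff n f * coeff j (a ^ n)
/-- g₁(x) = ∑_{n≥0} (2^{n+1}-2) Bₙ x^{n+1}. -/
noncomputable def g1 : PowerSeries ℚ :=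
  PowerSeries.mk fun n => if n = 0 then 0 else ((2 : ℚ) ^ n - 2) * bernoulli (n - 1)

section Geometric

variable {R : Type*} [CommRing R]

theorem inverse_one_sub_C_mul_X (a : R) : Ring.inverse (1 - C a * X) = mk fun n => a ^ n := by
  have h : (1 - C a * X) * rescale a (PowerSeries.mk 1) = 1 := by
    rw [← rescale_X, ← map_one (rescale a), ← map_sub, ← map_mul, mul_comm,
      mk_one_mul_one_sub_eq_one, map_one]
  simp only [rescale_mk, Pi.one_apply, mul_one] at h
  simpa only [h, mul_one] using
    Ring.inverse_mul_cancel_left _ (mk fun n => a ^ n) (IsUnit.of_mul_eq_one _ h)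

theorem coeff_mk_pow_pow_succ (a : R) (m j : ℕ) :
    coeff j ((mk fun n => a ^ n) ^ (m + 1)) = a ^ j * (m + j).choose m := by
  have h : (mk fun n => a ^ n) = rescale a (PowerSeries.mk 1) := by rw [rescale_mk]; simp
  rw [h, ← map_pow, mk_one_pow_eq_mk_choose_add, coeff_rescale, coeff_mk]

end Geometric

theorem substPS_sub (a f g : ℚ⟦X⟧) : substPS a (f - g) = substPS a f - substPS a g := by
  ext j
  simp only [substPS, coeff_mk, map_sub, sub_mul, sum_sub_distrib]

theorem coeff_succ_substPS_X_mul {f : ℚ⟦X⟧} (hf : constantCoeff f = 0) (u : ℚ⟦X⟧) (k : ℕ) :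
    coeff (k + 1) (substPS (X * u) f) =
      ∑ m ∈ range (k + 1), coeff (m + 1) f * coeff (k - m) (u ^ (m + 1)) := by
  rw [substPS, coeff_mk, sum_range_succ', coeff_zero_eq_constantCoeff, hf, zero_mul, add_zero]
  refine sum_congr rfl fun m hm => ?_
  rw [mul_pow, coeff_X_pow_mul', if_pos (by simp at hm; omega), Nat.add_sub_add_right]

/-- If `d` starts at `x ^ n`, substituting `x u` for `x` changes its coefficient of
`x ^ (n + 1)` by `n u'(0) d_n`. -/
theorem eq_zero_of_substPS_X_mul_eq_self {u d : ℚ⟦X⟧} (hu : constantCoeff u = 1)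
    (hu' : coeff 1 u ≠ 0) (hd0 : constantCoeff d = 0) (hd : substPS (X * u) d = d) : d = 0 := by
  suffices h : ∀ n, coeff n d = 0 by ext n; simpa using h n
  intro n
  induction n using Nat.strong_induction_on with
  | _ n ih =>
    rcases n with _ | n
    · simpa using hd0
    have hcoeff := congrArg (coeff (n + 2)) hd
    rw [coeff_succ_substPS_X_mul hd0, sum_range_succ, sum_range_succ,
      sum_eq_zero fun m hm => by rw [ih (m + 1) (by simp at hm; omega), zero_mul]] at hcoeff
    have h1 : coeff (n + 1 - n) (u ^ (n + 1)) = (n + 1) * coeff 1 u := by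
      simp [coeff_one_pow, hu]
    have h0 : coeff (n + 1 - (n + 1)) (u ^ (n + 2)) = 1 := by simp [hu]
    rw [h1, h0, mul_one, zero_add, add_eq_right] at hcoeff
    simpa [hu', Nat.cast_add_one_ne_zero] using hcoeff

-- Both sides are `B_k(2)`, by `B_k(x + 1) = B_k(x) + k x^(k-1)` at `x = 1`.
theorem sum_bernoulli_mul_choose_mul_two_pow (k : ℕ) :
    ∑ m ∈ range (k + 1), bernoulli m * k.choose m * 2 ^ (k - m) = bernoulli' k + k := by
  have h := Polynomial.bernoulli_eval_one_add k 1
  rw [one_add_one_eq_two, one_pow, mul_one, Polynomial.bernoulli_eval_one] at h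
  rw [← h, Polynomial.bernoulli, Polynomial.eval_finsetSum]
  refine sum_congr rfl fun m _ => ?_
  simp

theorem sum_two_pow_sub_two_mul_bernoulli_mul_choose (k : ℕ) :
    ∑ m ∈ range (k + 1), ((2 : ℚ) ^ (m + 1) - 2) * bernoulli m * (2 ^ (k - m) * k.choose m) =
      (2 ^ (k + 1) - 2) * bernoulli k + if k ≤ 1 then 0 else -2 * (k : ℚ) := by
  have hsplit : ∀ m ∈ range (k + 1),
      ((2 : ℚ) ^ (m + 1) - 2) * bernoulli m * (2 ^ (k - m) * k.choose m) =
        2 ^ (k + 1) * (k.choose m * bernoulli m) -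
          2 * (bernoulli m * k.choose m * 2 ^ (k - m)) := by
    intro m hm
    rw [show (2 : ℚ) ^ (k + 1) = 2 ^ (m + 1) * 2 ^ (k - m) by
      rw [← pow_add]; congr 1; simp at hm; omega]
    ring
  rw [sum_congr rfl hsplit, sum_sub_distrib, ← mul_sum, ← mul_sum, sum_range_succ,
    sum_bernoulli, Nat.choose_self, Nat.cast_one, one_mul, sum_bernoulli_mul_choose_mul_two_pow]
  rcases k with _ | _ | k
  · norm_num
  · norm_num [bernoulli'_one, bernoulli_one]
  · rw [if_neg (by omega), if_neg (by omega), bernoulli_eq_bernoulli'_of_ne_one (by omega)]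
    push_cast
    ring

theorem inverse_one_sub_two_mul_X : Ring.inverse (1 - 2 * X : ℚ⟦X⟧) = mk fun n => 2 ^ n := by
  rw [← inverse_one_sub_C_mul_X, map_ofNat]

theorem constantCoeff_g1 : constantCoeff g1 = 0 := by
  simp [g1]

theorem coeff_succ_g1 (k : ℕ) : coeff (k + 1) g1 = (2 ^ (k + 1) - 2) * bernoulli k := by
  simp [g1]

theorem coeff_succ_correction (k : ℕ) :
    coeff (k + 1) (2 * X ^ 3 * (X - 2) * Ring.inverse ((1 - X : ℚ⟦X⟧) ^ 2)) =
      if k ≤ 1 then 0 else -2 * (k : ℚ) := by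
  set T : ℚ⟦X⟧ := mk fun j => (j + 1 : ℚ)
  have hinv : Ring.inverse ((1 - X : ℚ⟦X⟧) ^ 2) = T := by
    rw [← Ring.inverse_pow, show (1 - X : ℚ⟦X⟧) = 1 - C 1 * X by simp,
      inverse_one_sub_C_mul_X]
    ext j
    rw [coeff_mk_pow_pow_succ, coeff_mk, Nat.choose_one_right]
    push_cast
    ring
  have hE : 2 * X ^ 3 * (X - 2) * T = C 2 * (X ^ 4 * T) - C 4 * (X ^ 3 * T) := by
    rw [map_ofNat, map_ofNat]; ring
  rw [hinv, hE, map_sub, coeff_C_mul, coeff_C_mul, coeff_X_pow_mul', coeff_X_pow_mul']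
  rcases k with _ | _ | _ | k
  · norm_num
  · norm_num
  · norm_num [T]
  · simp only [T, coeff_mk, if_pos (by omega : 4 ≤ k + 3 + 1),
      if_pos (by omega : 3 ≤ k + 3 + 1), if_neg (by omega : ¬ k + 3 ≤ 1),
      show k + 3 + 1 - 4 = k by omega, show k + 3 + 1 - 3 = k + 1 by omega]
    push_cast
    ring

theorem substPS_g1 :
    substPS (X * Ring.inverse (1 - 2 * X)) g1 =
      g1 + 2 * X ^ 3 * (X - 2) * Ring.inverse ((1 - X) ^ 2) := by
  ext (_ | k)
  · simp [substPS, g1]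
  rw [map_add, coeff_succ_substPS_X_mul constantCoeff_g1, coeff_succ_g1, coeff_succ_correction,
    ← sum_two_pow_sub_two_mul_bernoulli_mul_choose]
  refine sum_congr rfl fun m hm => ?_
  rw [coeff_succ_g1, inverse_one_sub_two_mul_X, coeff_mk_pow_pow_succ,
    Nat.add_sub_cancel' (by simp at hm; omega)]

/-- g₁ is the unique element of xℚ[[x]] satisfying
  g₁(x/(1-2x)) = g₁(x) + 2x³(x-2)/(1-x)². -/
theorem g1_unique :
    substPS (X * Ring.inverse (1 - 2 * X)) g1 =
        g1 + 2 * X ^ 3 * (X - 2) * Ring.inverse ((1 - X) ^ 2) ∧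
      ∀ h : PowerSeries ℚ, constantCoeff h = 0 →
        substPS (X * Ring.inverse (1 - 2 * X)) h =
          h + 2 * X ^ 3 * (X - 2) * Ring.inverse ((1 - X) ^ 2) → h = g1 := by
  refine ⟨substPS_g1, fun h hh0 hh => sub_eq_zero.mp ?_⟩
  refine eq_zero_of_substPS_X_mul_eq_self (u := Ring.inverse (1 - 2 * X)) ?_ ?_ ?_ ?_
  · simp [inverse_one_sub_two_mul_X]
  · simp [inverse_one_sub_two_mul_X]
  · simp [hh0, constantCoeff_g1]
  · rw [substPS_sub, hh, substPS_g1]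
    ring
end

section
/- For every integer m \ge 2, \sum_{n=0}^{m-1} \binom{m}{n} 2^{m-n} (2^{n+1}-2) B_n = -2m, where B_n are the Bernoulli numbers. -/
/-!
Since `2 ^ (m - n) * 2 ^ (n + 1) = 2 ^ (m + 1)`, the sum splits into `2 ^ (m + 1)` times
`∑ n < m, C(m, n) B_n = 0` minus twice `∑ n < m, C(m, n) 2 ^ (m - n) B_n`. The latter is
`B_m(2) - B_m`, and the difference equation `B_m(x + 1) = B_m(x) + m x ^ (m - 1)` at `x = 1`
shows that it equals `m`.
-/

open Finset

namespace Polynomial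

theorem bernoulli_eval (n : ℕ) (x : ℚ) :
    (bernoulli n).eval x =
      ∑ i ∈ range (n + 1), (n.choose i : ℚ) * x ^ (n - i) * _root_.bernoulli i := by
  rw [bernoulli, eval_finsetSum]
  refine sum_congr rfl fun i _ => ?_
  rw [eval_monomial]
  ring

theorem bernoulli_eval_two (n : ℕ) : (bernoulli n).eval 2 = bernoulli' n + n := by
  rw [show (2 : ℚ) = 1 + 1 by norm_num, bernoulli_eval_one_add, bernoulli_eval_one, one_pow,
    mul_one]

end Polynomial

theorem sum_range_choose_mul_two_pow_mul_bernoulli {m : ℕ} (hm : m ≠ 1) :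
    ∑ n ∈ range m, (m.choose n : ℚ) * 2 ^ (m - n) * bernoulli n = m := by
  have h := Polynomial.bernoulli_eval m 2
  rw [Polynomial.bernoulli_eval_two, ← bernoulli_eq_bernoulli'_of_ne_one hm, sum_range_succ,
    Nat.choose_self, Nat.sub_self] at h
  simp only [Nat.cast_one, pow_zero, one_mul] at h
  linarith

theorem bernoulli_genocchi_recursion (m : ℕ) (hm : 2 ≤ m) :
    ∑ n ∈ range m, (m.choose n : ℚ) * 2 ^ (m - n) * ((2 : ℚ) ^ (n + 1) - 2) * bernoulli n =
      -2 * m := by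
  have hm1 : m ≠ 1 := by omega
  calc ∑ n ∈ range m, (m.choose n : ℚ) * 2 ^ (m - n) * ((2 : ℚ) ^ (n + 1) - 2) * bernoulli n
      = ∑ n ∈ range m, (2 ^ (m + 1) * ((m.choose n : ℚ) * bernoulli n)
          - 2 * ((m.choose n : ℚ) * 2 ^ (m - n) * bernoulli n)) := by
        refine sum_congr rfl fun n hn => ?_
        have hpow : (2 : ℚ) ^ (m - n) * 2 ^ (n + 1) = 2 ^ (m + 1) := by
          rw [← pow_add]
          have := mem_range.mp hn
          congr 1
          omega
        linear_combination ((m.choose n : ℚ) * bernoulli n) * hpow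
    _ = -2 * m := by
        rw [sum_sub_distrib, ← mul_sum, ← mul_sum, sum_bernoulli, if_neg hm1,
          sum_range_choose_mul_two_pow_mul_bernoulli hm1]
        ring
end
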